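/- arXiv:1806.06691 — 2 statements merged into one kernel-verified Lean document; each statement's English description precedes it below -/
import Mathlib

section
/- Let f ∈ L^1(ℝ^d) and a > 0 be such that |f̂(ξ)| ≤ C e^{-a‖ξ‖} for all ξ ∈ ℝ^d. If f vanishes almost everywhere on a nonempty open set, then f = 0 almost everywhere. -/
/-!
Pass to `f₀ = f` off `U`, `0` on `U`: it has the same Fourier transform, which is integrable
because of the exponential decay, and `f₀` is continuous on `U`, so Fourier inversion gives
`𝓕⁻ (𝓕 f) = 0` on `U`. The decay of `𝓕 f` also makes `𝓕⁻ (𝓕 f)` real analytic: along any line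
`t ↦ x₀ + t • w` it is the restriction of a holomorphic function on a strip around the imaginary
axis. Hence `𝓕⁻ (𝓕 f)` vanishes everywhere, so `𝓕 f = 0`, and `f = 0` a.e. because `∫ f • 𝓕 ψ =
∫ 𝓕 f • ψ` for Schwartz functions `ψ`, while every test function is of the form `𝓕 ψ`.
-/

open MeasureTheory Real Set
open scoped FourierTransform
open Complex Filter Topology
open scoped RealInnerProductSpace SchwartzMap

theorem pow_mul_exp_neg_mul_le (m : ℕ) {b t : ℝ} (hb : 0 < b) (ht : 0 ≤ t) :
    t ^ m * rexp (-b * t) ≤ m.factorial / b ^ m := by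
  have h := Real.pow_div_factorial_le_exp (x := b * t) (mul_nonneg hb.le ht) m
  rw [div_le_iff₀ (by positivity)] at h
  rw [le_div_iff₀ (by positivity), neg_mul, Real.exp_neg]
  calc t ^ m * (rexp (b * t))⁻¹ * b ^ m = (b * t) ^ m * (rexp (b * t))⁻¹ := by ring
    _ ≤ (rexp (b * t) * m.factorial) * (rexp (b * t))⁻¹ := by gcongr
    _ = m.factorial := by field_simp

theorem integrable_pow_mul_exp_neg_mul_norm {V : Type*} [NormedAddCommGroup V] [NormedSpace ℝ V]
    [MeasurableSpace V] [BorelSpace V] [SecondCountableTopology V]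
    {μ : Measure V} [μ.HasTemperateGrowth] (k : ℕ) {b : ℝ} (hb : 0 < b) :
    Integrable (fun x : V ↦ ‖x‖ ^ k * rexp (-b * ‖x‖)) μ := by
  have h := integrable_of_le_of_pow_mul_le (μ := μ) (f := fun x : V ↦ rexp (-b * ‖x‖))
    (C₁ := 1) (C₂ := (k + μ.integrablePower).factorial / b ^ (k + μ.integrablePower))
    (fun x ↦ by
      rw [Real.norm_of_nonneg (Real.exp_pos _).le, Real.exp_le_one_iff]
      nlinarith [norm_nonneg x])
    (fun x ↦ by
      rw [Real.norm_of_nonneg (Real.exp_pos _).le]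
      exact pow_mul_exp_neg_mul_le _ hb (norm_nonneg x))
    (by fun_prop)
  simpa only [Real.norm_of_nonneg (Real.exp_pos _).le] using h

theorem MeasureTheory.Integrable.of_norm_le_mul_exp_neg {V F : Type*} [NormedAddCommGroup V]
    [NormedSpace ℝ V] [MeasurableSpace V] [BorelSpace V] [SecondCountableTopology V]
    [NormedAddCommGroup F]
    {μ : Measure V} [μ.HasTemperateGrowth] {g : V → F} {a C : ℝ} (ha : 0 < a)
    (hg : AEStronglyMeasurable g μ) (hgC : ∀ x, ‖g x‖ ≤ C * rexp (-a * ‖x‖)) :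
    Integrable g μ :=
  ((integrable_pow_mul_exp_neg_mul_norm 0 ha).const_mul C).mono' hg
    (Eventually.of_forall fun x ↦ by simpa using hgC x)

theorem norm_cexp_mul_ofReal_le {z : ℂ} {s : ℝ} (hz : |z.re| ≤ s) (x : ℝ) :
    ‖cexp (z * x)‖ ≤ rexp (s * |x|) := by
  rw [Complex.norm_exp, Complex.re_mul_ofReal, Real.exp_le_exp]
  calc z.re * x ≤ |z.re| * |x| := by rw [← abs_mul]; exact le_abs_self _
    _ ≤ s * |x| := by gcongr

theorem convex_setOf_mul_abs_re_lt {K : ℝ} (hK : 0 ≤ K) (a : ℝ) :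
    Convex ℝ {z : ℂ | K * |z.re| < a} := by
  have : ConvexOn ℝ univ fun z : ℂ ↦ K * |z.re| :=
    (convexOn_univ_norm.comp_linearMap Complex.reLm).smul hK
  simpa using this.convex_lt a

section Laplace

variable {V E : Type*} [NormedAddCommGroup V] [NormedSpace ℝ V] [NormedAddCommGroup E]
  [NormedSpace ℂ E] {g : V → E} {a C : ℝ}

theorem norm_cexp_mul_smul_le (hgC : ∀ ξ, ‖g ξ‖ ≤ C * rexp (-a * ‖ξ‖)) (ℓ : V →L[ℝ] ℝ)
    {z : ℂ} {s : ℝ} (hz : |z.re| ≤ s) (ξ : V) :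
    ‖cexp (z * ℓ ξ) • g ξ‖ ≤ C * rexp (-(a - ‖ℓ‖ * s) * ‖ξ‖) := by
  have hC : 0 ≤ C := by simpa using (norm_nonneg _).trans (hgC 0)
  calc ‖cexp (z * ℓ ξ) • g ξ‖ ≤ rexp (s * |ℓ ξ|) * (C * rexp (-a * ‖ξ‖)) := by
        rw [norm_smul]; gcongr; exacts [norm_cexp_mul_ofReal_le hz _, hgC ξ]
    _ ≤ rexp (s * (‖ℓ‖ * ‖ξ‖)) * (C * rexp (-a * ‖ξ‖)) := by
        gcongr
        exacts [(abs_nonneg _).trans hz, ℓ.le_opNorm ξ]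
    _ = C * rexp (-(a - ‖ℓ‖ * s) * ‖ξ‖) := by
        rw [mul_left_comm, ← Real.exp_add]; ring_nf

variable [MeasurableSpace V] [BorelSpace V] [SecondCountableTopology V]
  {μ : Measure V} [μ.HasTemperateGrowth]

theorem differentiableOn_integral_cexp_mul_smul (hg : AEStronglyMeasurable g μ)
    (hgC : ∀ ξ, ‖g ξ‖ ≤ C * rexp (-a * ‖ξ‖)) (ℓ : V →L[ℝ] ℝ) :
    DifferentiableOn ℂ (fun z : ℂ ↦ ∫ ξ, cexp (z * ℓ ξ) • g ξ ∂μ) {z | ‖ℓ‖ * |z.re| < a} := by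
  intro z₀ hz₀
  obtain ⟨ε, hε0, hε⟩ := exists_pos_mul_lt (sub_pos.2 hz₀) ‖ℓ‖
  set b := a - ‖ℓ‖ * (|z₀.re| + ε)
  have hb : 0 < b := by simp only [b]; linarith
  have hre : ∀ z ∈ Metric.ball z₀ ε, |z.re| ≤ |z₀.re| + ε := fun z hz ↦ by
    have := (abs_re_le_norm (z - z₀)).trans (le_of_lt (mem_ball_iff_norm.1 hz))
    rw [sub_re] at this
    linarith [abs_sub_abs_le_abs_sub z.re z₀.re]
  have hmeas : ∀ z : ℂ, AEStronglyMeasurable (fun ξ ↦ cexp (z * ℓ ξ) • g ξ) μ := fun z ↦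
    (by fun_prop : Continuous fun ξ ↦ cexp (z * ℓ ξ)).aestronglyMeasurable.smul hg
  have hbound : ∀ z ∈ Metric.ball z₀ ε, ∀ ξ, ‖cexp (z * ℓ ξ) • g ξ‖ ≤ C * rexp (-b * ‖ξ‖) :=
    fun z hz ↦ norm_cexp_mul_smul_le hgC ℓ (hre z hz)
  refine (hasDerivAt_integral_of_dominated_loc_of_deriv_le
    (F' := fun z ξ ↦ (cexp (z * ℓ ξ) * ℓ ξ) • g ξ)
    (bound := fun ξ ↦ ‖ℓ‖ * C * (‖ξ‖ ^ 1 * rexp (-b * ‖ξ‖)))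
    (Metric.ball_mem_nhds z₀ hε0) (Eventually.of_forall hmeas)
    (Integrable.of_norm_le_mul_exp_neg hb (hmeas z₀)
      (hbound z₀ (Metric.mem_ball_self hε0))) ?_ ?_ ?_ ?_).2.differentiableAt
    |>.differentiableWithinAt
  · exact (by fun_prop : Continuous fun ξ ↦ cexp (z₀ * ℓ ξ) * ℓ ξ).aestronglyMeasurable.smul hg
  · refine Eventually.of_forall fun ξ z hz ↦ ?_
    calc ‖(cexp (z * ℓ ξ) * ℓ ξ) • g ξ‖ = |ℓ ξ| * ‖cexp (z * ℓ ξ) • g ξ‖ := by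
          rw [mul_comm, mul_smul, norm_smul, Complex.norm_real, Real.norm_eq_abs]
      _ ≤ (‖ℓ‖ * ‖ξ‖) * (C * rexp (-b * ‖ξ‖)) := by
          gcongr; exacts [ℓ.le_opNorm ξ, hbound z hz ξ]
      _ = _ := by ring
  · exact (integrable_pow_mul_exp_neg_mul_norm 1 hb).const_mul _
  · exact Eventually.of_forall fun ξ z _ ↦
      (((hasDerivAt_id z).mul_const (ℓ ξ : ℂ)).cexp.smul_const (g ξ)).congr_deriv (by simp)

end Laplace

theorem tendsto_ofReal_mul_nhdsNE_zero {c : ℂ} (hc : c ≠ 0) :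
    Tendsto (fun t : ℝ ↦ (t : ℂ) * c) (𝓝[≠] 0) (𝓝[≠] 0) := by
  refine tendsto_nhdsWithin_of_tendsto_nhds_of_eventually_within _ ?_ ?_
  · exact ((continuous_ofReal.mul continuous_const).tendsto' _ _ (by simp)).mono_left
      nhdsWithin_le_nhds
  · filter_upwards [self_mem_nhdsWithin] with t ht
    simpa [hc] using ht

section Fourier

variable {V E : Type*} [NormedAddCommGroup V] [InnerProductSpace ℝ V] [FiniteDimensional ℝ V]
  [MeasurableSpace V] [BorelSpace V] [NormedAddCommGroup E] [NormedSpace ℂ E]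

theorem fourierInv_add_smul_eq_integral (F : V → E) (x₀ w : V) (t : ℝ) :
    𝓕⁻ F (x₀ + t • w) = ∫ ξ, cexp ((t * (2 * π * I)) * innerSL ℝ w ξ) • 𝐞 ⟪ξ, x₀⟫ • F ξ := by
  rw [Real.fourierInv_eq]
  congr 1 with ξ
  rw [inner_add_right, inner_smul_right, AddChar.map_add_eq_mul, mul_comm, mul_smul,
    innerSL_apply_apply, real_inner_comm w ξ, Circle.smul_def, Real.fourierChar_apply]
  congr 2
  push_cast
  ring_nf

variable [CompleteSpace E]

theorem fourierInv_eq_zero_of_eqOn_zero {F : V → E} {a C : ℝ} (ha : 0 < a)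
    (hF : AEStronglyMeasurable F) (hFC : ∀ ξ, ‖F ξ‖ ≤ C * rexp (-a * ‖ξ‖))
    {U : Set V} (hU : IsOpen U) (hUne : U.Nonempty) (h0 : EqOn (𝓕⁻ F) 0 U) :
    𝓕⁻ F = 0 := by
  obtain ⟨x₀, hx₀⟩ := hUne
  ext p
  set w := p - x₀
  set g : V → E := fun ξ ↦ 𝐞 ⟪ξ, x₀⟫ • F ξ
  set Φ : ℂ → E := fun z ↦ ∫ ξ, cexp (z * innerSL ℝ w ξ) • g ξ
  set S : Set ℂ := {z | ‖innerSL ℝ w‖ * |z.re| < a}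
  -- `Φ` is holomorphic on the strip `S ⊇ iℝ`, and `t ↦ Φ (2πit)` is `𝓕⁻ F` along the line
  -- through `x₀` and `p`.
  have hanalytic : AnalyticOnNhd ℂ Φ S := by
    refine (differentiableOn_integral_cexp_mul_smul (C := C) ?_ (fun ξ ↦ ?_) _).analyticOnNhd
      (isOpen_lt (by fun_prop) continuous_const)
    · exact (by fun_prop : Continuous fun ξ ↦ (𝐞 ⟪ξ, x₀⟫ : ℂ)).aestronglyMeasurable.smul hF
    · simpa [g, Circle.norm_smul] using hFC ξ
  have hline (t : ℝ) : 𝓕⁻ F (x₀ + t • w) = Φ (t * (2 * π * I)) :=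
    fourierInv_add_smul_eq_integral F x₀ w t
  have hnear : ∀ᶠ t : ℝ in 𝓝 0, x₀ + t • w ∈ U :=
    (by fun_prop : Continuous fun t : ℝ ↦ x₀ + t • w).continuousAt.preimage_mem_nhds
      (by simpa using hU.mem_nhds hx₀)
  have hfreq : ∃ᶠ z in 𝓝[≠] 0, Φ z = 0 := by
    refine (tendsto_ofReal_mul_nhdsNE_zero (c := 2 * π * I) (by simp [pi_ne_zero])).frequently
      (Eventually.frequently ?_)
    filter_upwards [nhdsWithin_le_nhds hnear] with t ht
    exact (hline t).symm.trans (h0 ht)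
  have hzero := hanalytic.eqOn_zero_of_preconnected_of_frequently_eq_zero
    (convex_setOf_mul_abs_re_lt (norm_nonneg _) a).isPreconnected
    (show (0 : ℂ) ∈ S by simpa [S] using ha) hfreq
    (show (1 * (2 * π * I) : ℂ) ∈ S by simpa [S] using ha)
  have hp : x₀ + (1 : ℝ) • w = p := by simp [w]
  show 𝓕⁻ F p = 0
  rw [← hp, hline, ofReal_one]
  exact hzero

theorem fourierInv_fourier_eqOn_zero {f : V → E} (hf : Integrable f) (hf' : Integrable (𝓕 f))
    {U : Set V} (hU : IsOpen U) (hfU : ∀ᵐ x, x ∈ U → f x = 0) : EqOn (𝓕⁻ (𝓕 f)) 0 U := by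
  intro y hy
  -- `Uᶜ.indicator f` is a.e. equal to `f` and continuous on `U`, where inversion holds pointwise.
  have hae : Uᶜ.indicator f =ᵐ[volume] f := by
    filter_upwards [hfU] with x hx
    by_cases hxU : x ∈ U <;> simp [hxU, hx]
  have h𝓕 : 𝓕 (Uᶜ.indicator f) = 𝓕 f := funext (Real.fourier_congr_ae hae)
  have hcont : ContinuousAt (Uᶜ.indicator f) y := by
    refine continuousAt_const.congr (f := fun _ ↦ (0 : E)) ?_
    filter_upwards [hU.mem_nhds hy] with x hx
    simp [hx]
  have := (hf.congr hae.symm).fourierInv_fourier_eq (h𝓕 ▸ hf') hcont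
  rw [h𝓕] at this
  simpa [hy] using this

theorem Continuous.eq_zero_of_fourierInv_eq_zero {F : V → E} (hc : Continuous F)
    (hF : Integrable F) (h0 : 𝓕⁻ F = 0) : F = 0 := by
  have h𝓕 : 𝓕 F = 0 := funext fun ξ ↦ by
    simpa [Real.fourierInv_eq_fourier_neg] using congrFun h0 (-ξ)
  rw [← hc.fourierInv_fourier_eq hF (by rw [h𝓕]; exact integrable_zero _ _ _), h𝓕]
  ext x
  simp [Real.fourierInv_eq]

theorem MeasureTheory.Integrable.ae_eq_zero_of_fourier_eq_zero {f : V → E} (hf : Integrable f)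
    (h0 : 𝓕 f = 0) : f =ᵐ[volume] 0 := by
  refine ae_eq_zero_of_integral_contDiff_smul_eq_zero hf.locallyIntegrable fun φ hφ hφc ↦ ?_
  set ψ : 𝓢(V, ℂ) := 𝓕⁻ ((hφc.comp_left ofReal_zero).toSchwartzMap (ofRealCLM.contDiff.comp hφ))
  have hψ : 𝓕 (ψ : V → ℂ) = fun x ↦ (φ x : ℂ) := by
    rw [← SchwartzMap.fourier_coe, FourierTransform.fourier_fourierInv_eq]
    rfl
  have hpair := VectorFourier.integral_bilin_fourierIntegral_eq_flip (L := innerₗ V)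
    (ContinuousLinearMap.lsmul ℂ ℂ (E := E)).flip Real.continuous_fourierChar continuous_inner hf
    (ψ.integrable (μ := volume))
  simp only [flip_innerₗ, ContinuousLinearMap.flip_apply,
    ContinuousLinearMap.lsmul_apply] at hpair
  calc ∫ x, φ x • f x = ∫ x, 𝓕 (ψ : V → ℂ) x • f x := by simp [hψ, Complex.coe_smul]
    _ = ∫ ξ, ψ ξ • 𝓕 f ξ := hpair.symm
    _ = 0 := by simp [h0]

end Fourier

/-- If `f ∈ L¹(ℝ^d)` has Fourier transform bounded by `C e^{-a‖ξ‖}` with `a > 0`,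
and `f` vanishes a.e. on a nonempty open set, then `f = 0` a.e. -/
theorem fourier_exp_decay_vanish_open_implies_zero
    {d : ℕ} (f : EuclideanSpace ℝ (Fin d) → ℂ)
    (hf : Integrable f volume) (a C : ℝ) (ha : 0 < a)
    (hdecay : ∀ ξ : EuclideanSpace ℝ (Fin d), ‖𝓕 f ξ‖ ≤ C * Real.exp (-a * ‖ξ‖))
    (U : Set (EuclideanSpace ℝ (Fin d))) (hU : IsOpen U) (hUne : U.Nonempty)
    (hvanish : ∀ᵐ x ∂volume, x ∈ U → f x = 0) :
    f =ᵐ[volume] 0 := by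
  have h𝓕cont : Continuous (𝓕 f) :=
    VectorFourier.fourierIntegral_continuous Real.continuous_fourierChar continuous_inner hf
  have h𝓕int : Integrable (𝓕 f) :=
    .of_norm_le_mul_exp_neg ha h𝓕cont.aestronglyMeasurable hdecay
  have hinv : 𝓕⁻ (𝓕 f) = 0 :=
    fourierInv_eq_zero_of_eqOn_zero ha h𝓕cont.aestronglyMeasurable hdecay hU hUne
      (fourierInv_fourier_eqOn_zero hf h𝓕int hU hvanish)
  exact hf.ae_eq_zero_of_fourier_eq_zero (h𝓕cont.eq_zero_of_fourierInv_eq_zero h𝓕int hinv)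
end

section
/- Let f ∈ C_c(ℝ^d) and for y ∈ ℝ^{d−1} let f_y(t) = f(t, y), f_y*(t) = conj(f_y(−t)), and g(t) = ∫_{ℝ^{d−1}} (f_y * f_y*)(t) dy. Then g ∈ C_c(ℝ), ĝ(ξ) = ∫_{ℝ^{d−1}} |f̂_y(ξ)|² dy ≥ 0 for all ξ ∈ ℝ, and ∫_ℝ ĝ(ξ) dξ = ‖f‖²_{L²(ℝ^d)}. -/
/-!
Write `f_y = f(·, y)`. The integrand `(t, y) ↦ (f_y ⋆ f_y^*)(t)` of `g` is continuous with compact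
support, hence so is `g`, and Fubini lets the Fourier transform pass under `∫ dy`, where the
convolution theorem gives `(f_y ⋆ f_y^*)^ = |f̂_y|²`; in particular `ĝ ≥ 0`. For an integrable `g`,
continuous at `0`, with `ĝ ≥ 0`, the Gaussian means `∫ e^{-‖ξ‖²/c} ĝ(ξ) dξ` tend to `g(0)`, so by
Fatou's lemma `ĝ` is integrable and `∫ ĝ = g(0) = ∫ ‖f‖²`.
-/

open MeasureTheory Real Set
open scoped FourierTransform

open Filter Topology Complex ComplexConjugate Function Convolution
open scoped RealInnerProductSpace ComplexOrder

theorem MeasureTheory.integrable_of_tendsto_integral_of_nonneg {α : Type*} [MeasurableSpace α]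
    {μ : Measure α} {G : ℕ → α → ℝ} {F : α → ℝ} {I : ℝ} (hG : ∀ n, Integrable (G n) μ)
    (hG₀ : ∀ n, 0 ≤ᵐ[μ] G n) (hGF : ∀ᵐ x ∂μ, Tendsto (G · x) atTop (𝓝 (F x)))
    (hI : Tendsto (fun n ↦ ∫ x, G n x ∂μ) atTop (𝓝 I)) :
    Integrable F μ := by
  refine ⟨aestronglyMeasurable_of_tendsto_ae _ (fun n ↦ (hG n).1) hGF, ?_⟩
  have hlintegral : ∀ n, ∫⁻ x, ‖G n x‖ₑ ∂μ = ENNReal.ofReal (∫ x, G n x ∂μ) := fun n ↦ by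
    rw [ofReal_integral_eq_lintegral_ofReal (hG n) (hG₀ n)]
    exact lintegral_congr_ae <| (hG₀ n).mono fun x hx ↦ Real.enorm_of_nonneg hx
  calc ∫⁻ x, ‖F x‖ₑ ∂μ = ∫⁻ x, liminf (fun n ↦ ‖G n x‖ₑ) atTop ∂μ :=
        lintegral_congr_ae <| hGF.mono fun x hx ↦ hx.enorm.liminf_eq.symm
    _ ≤ liminf (fun n ↦ ∫⁻ x, ‖G n x‖ₑ ∂μ) atTop :=
        lintegral_liminf_le' fun n ↦ (hG n).1.aemeasurable.enorm
    _ = ENNReal.ofReal I := by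
        simp_rw [hlintegral]
        exact (ENNReal.tendsto_ofReal hI).liminf_eq
    _ < ⊤ := ENNReal.ofReal_lt_top

section ParametricIntegral

variable {X Y F : Type*} [TopologicalSpace X] [TopologicalSpace Y] [MeasurableSpace Y]
  {μ : Measure Y} [NormedAddCommGroup F] [NormedSpace ℝ F]

theorem integral_eq_setIntegral_image_snd_tsupport {f : X → Y → F} (x : X) :
    ∫ y, f x y ∂μ = ∫ y in Prod.snd '' tsupport f.uncurry, f x y ∂μ := by
  refine (setIntegral_eq_integral_of_forall_compl_eq_zero fun y hy ↦ ?_).symm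
  by_contra h
  exact hy ⟨(x, y), subset_tsupport _ h, rfl⟩

theorem continuous_parametric_integral_of_hasCompactSupport [OpensMeasurableSpace Y]
    [FirstCountableTopology X] [LocallyCompactSpace X] [SecondCountableTopologyEither Y F]
    [IsLocallyFiniteMeasure μ] {f : X → Y → F} (hf : Continuous f.uncurry)
    (h'f : HasCompactSupport f.uncurry) :
    Continuous fun x ↦ ∫ y, f x y ∂μ :=
  (continuous_parametric_integral_of_continuous hf (h'f.image continuous_snd)).congr fun x ↦
    (integral_eq_setIntegral_image_snd_tsupport x).symm

theorem HasCompactSupport.parametric_integral [T2Space X] {f : X → Y → F}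
    (h'f : HasCompactSupport f.uncurry) : HasCompactSupport fun x ↦ ∫ y, f x y ∂μ := by
  refine .intro (h'f.image continuous_fst) fun x hx ↦ ?_
  have : ∀ y, f x y = 0 := fun y ↦ by
    by_contra h
    exact hx ⟨(x, y), subset_tsupport _ h, rfl⟩
  simp [this]

end ParametricIntegral

section CompactSupport

variable {G Y R : Type*} [TopologicalSpace G] [TopologicalSpace Y]

theorem HasCompactSupport.comp_prodMk_const [T2Space G] [Zero R] {f : G × Y → R}
    (hf : HasCompactSupport f) (y : Y) : HasCompactSupport fun x ↦ f (x, y) := by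
  refine .intro (hf.image continuous_fst) fun x hx ↦ ?_
  by_contra h
  exact hx ⟨(x, y), subset_tsupport _ h, rfl⟩

theorem HasCompactSupport.fiberwise_mul_comp_sub [T2Space Y] [AddGroup G]
    [IsTopologicalAddGroup G] [MulZeroClass R] {f₁ f₂ : G × Y → R} (h₁ : HasCompactSupport f₁)
    (h₂ : HasCompactSupport f₂) :
    HasCompactSupport fun p : (G × Y) × G ↦ f₁ (p.2, p.1.2) * f₂ (p.2 - p.1.1, p.1.2) := by
  let Φ : (G × Y) × (G × Y) → (G × Y) × G := fun ab ↦ ((-ab.2.1 + ab.1.1, ab.1.2), ab.1.1)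
  refine .intro ((h₁.prod h₂).image (by fun_prop : Continuous Φ)) fun p hp ↦ ?_
  by_contra h
  refine hp ⟨((p.2, p.1.2), (p.2 - p.1.1, p.1.2)),
    ⟨subset_tsupport _ (left_ne_zero_of_mul h), subset_tsupport _ (right_ne_zero_of_mul h)⟩, ?_⟩
  simp [Φ]

end CompactSupport

variable {V : Type*} [NormedAddCommGroup V] [InnerProductSpace ℝ V]
  [MeasurableSpace V] [BorelSpace V] [FiniteDimensional ℝ V]

namespace Real

section Fourier

variable {E : Type*} [NormedAddCommGroup E] [NormedSpace ℂ E]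

theorem fourier_parametric_integral {Y : Type*} [TopologicalSpace Y] [MeasurableSpace Y]
    [OpensMeasurableSpace Y] {ν : Measure Y} [IsFiniteMeasureOnCompacts ν]
    {H : V → Y → E} (hH : Continuous H.uncurry) (h'H : HasCompactSupport H.uncurry) (ξ : V) :
    𝓕 (fun t ↦ ∫ y, H t y ∂ν) ξ = ∫ y, 𝓕 (fun t ↦ H t y) ξ ∂ν := by
  simp only [fourier_eq, Circle.smul_def, ← integral_smul]
  apply integral_integral_swap_of_hasCompactSupport (f := fun t y ↦ (𝐞 (-⟪t, ξ⟫) : ℂ) • H t y)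
  · exact (continuous_subtype_val.comp (continuous_fourierChar.comp
      (continuous_fst.inner continuous_const).neg)).smul hH
  · exact h'H.smul_left

theorem integrable_cexp_neg_inv_mul_sq_norm {c : ℝ} (hc : 0 < c) :
    Integrable fun ξ : V ↦ cexp (-(c⁻¹ : ℝ) * ‖ξ‖ ^ 2) := by
  simpa using GaussianFourier.integrable_cexp_neg_mul_sq_norm_add
    (b := (c⁻¹ : ℝ)) (by rw [ofReal_re]; positivity) 0 (0 : V)

theorem integrable_cexp_neg_inv_mul_sq_norm_smul_fourier {f : V → E} (hf : Integrable f)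
    {c : ℝ} (hc : 0 < c) : Integrable fun ξ ↦ cexp (-(c⁻¹ : ℝ) * ‖ξ‖ ^ 2) • 𝓕 f ξ :=
  (integrable_cexp_neg_inv_mul_sq_norm hc).smul_bdd _
    (VectorFourier.fourierIntegral_continuous continuous_fourierChar continuous_inner hf
      ).aestronglyMeasurable
    (.of_forall (VectorFourier.norm_fourierIntegral_le_integral_norm 𝐞 volume (innerₗ V) f))

variable [CompleteSpace E]

/-- By self-adjointness of `𝓕`, the damped integrals of `𝓕 f` are integrals of `f` against the
Fourier transforms of the Gaussians, which form an approximate identity at `0`. -/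
theorem tendsto_integral_cexp_sq_smul_fourier {f : V → E} (hf : Integrable f)
    (h0 : ContinuousAt f 0) :
    Tendsto (fun c : ℝ ↦ ∫ ξ, cexp (-(c⁻¹ : ℝ) * ‖ξ‖ ^ 2) • 𝓕 f ξ) atTop (𝓝 (f 0)) := by
  refine (tendsto_integral_gaussian_smul' hf h0).congr' ?_
  filter_upwards [Ioi_mem_atTop 0] with c (hc : 0 < c)
  have hswap := VectorFourier.integral_fourierIntegral_smul_eq_flip (L := innerₗ V)
    continuous_fourierChar continuous_inner (integrable_cexp_neg_inv_mul_sq_norm hc) hf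
  rw [flip_innerₗ] at hswap
  refine Eq.trans ?_ hswap
  congr 1 with w
  change _ = 𝓕 (fun ξ : V ↦ cexp (-(c⁻¹ : ℝ) * ‖ξ‖ ^ 2)) w • f w
  rw [fourier_gaussian_innerProductSpace (by rw [ofReal_re]; positivity), zero_sub, norm_neg]
  congr 2 <;> push_cast <;> field_simp

theorem integral_fourier_eq_apply_zero {f : V → E} (hf : Integrable f)
    (h0 : ContinuousAt f 0) (hf' : Integrable (𝓕 f)) : ∫ ξ, 𝓕 f ξ = f 0 :=
  tendsto_nhds_unique (by simpa using tendsto_integral_cexp_sq_smul hf')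
    (tendsto_integral_cexp_sq_smul_fourier hf h0)

end Fourier

theorem integrable_fourier_of_nonneg {f : V → ℂ} (hf : Integrable f)
    (h0 : ContinuousAt f 0) (hpos : ∀ ξ, 0 ≤ 𝓕 f ξ) : Integrable (𝓕 f) := by
  set w : ℝ → V → ℂ := fun c ξ ↦ cexp (-(c⁻¹ : ℝ) * ‖ξ‖ ^ 2) • 𝓕 f ξ
  -- Positivity makes the `L¹` norms of the damped transforms `w c` equal to `Re ∫ w c → Re f 0`.
  have hw_re : ∀ c ξ, (w c ξ).re = ‖w c ξ‖ := fun c ξ ↦ re_eq_norm.mpr <| by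
    simp only [w, smul_eq_mul, ← ofReal_pow, ← ofReal_neg, ← ofReal_mul, ← ofReal_exp]
    exact mul_nonneg (zero_le_real.mpr (exp_pos _).le) (hpos ξ)
  have hw_lim : ∀ ξ, Tendsto (fun c : ℝ ↦ w c ξ) atTop (𝓝 (𝓕 f ξ)) := fun ξ ↦ by
    have : Tendsto (fun c : ℝ ↦ cexp (-(c⁻¹ : ℝ) * ‖ξ‖ ^ 2)) atTop (𝓝 1) := by
      simpa using (tendsto_inv_atTop_zero.ofReal.neg.mul_const ((‖ξ‖ : ℂ) ^ 2)).cexp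
    simpa [w] using this.smul_const (𝓕 f ξ)
  have hw_int : ∀ n : ℕ, Integrable (w (n + 1)) := fun n ↦
    integrable_cexp_neg_inv_mul_sq_norm_smul_fourier hf (by positivity)
  have hn : Tendsto (fun n : ℕ ↦ (n : ℝ) + 1) atTop atTop :=
    tendsto_atTop_add_const_right _ 1 tendsto_natCast_atTop_atTop
  refine (integrable_norm_iff (VectorFourier.fourierIntegral_continuous continuous_fourierChar
    continuous_inner hf).aestronglyMeasurable).mp ?_
  refine integrable_of_tendsto_integral_of_nonneg (G := fun n ξ ↦ ‖w (n + 1) ξ‖)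
    (fun n ↦ (hw_int n).norm) (fun n ↦ .of_forall fun ξ ↦ norm_nonneg _)
    (.of_forall fun ξ ↦ ((hw_lim ξ).comp hn).norm) (I := (f 0).re) ?_
  refine ((continuous_re.tendsto _).comp
    ((tendsto_integral_cexp_sq_smul_fourier hf h0).comp hn)).congr fun n ↦ ?_
  have := integral_re (hw_int n)
  simp only [RCLike.re_to_complex, hw_re] at this
  exact this.symm

end Real

noncomputable def autocorrelation (φ : V → ℂ) (t : V) : ℂ := ∫ s, φ s * conj (φ (s - t))

theorem autocorrelation_eq_convolution (φ : V → ℂ) :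
    autocorrelation φ = φ ⋆[ContinuousLinearMap.mul ℂ ℂ] fun x ↦ conj (φ (-x)) := by
  ext t
  simp [autocorrelation, convolution_def]

theorem autocorrelation_zero (φ : V → ℂ) :
    autocorrelation φ 0 = (∫ s, ‖φ s‖ ^ 2 : ℝ) := by
  simp only [autocorrelation, sub_zero, mul_conj, normSq_eq_norm_sq]
  exact integral_ofReal

theorem Real.fourier_conj_comp_neg (φ : V → ℂ) (ξ : V) :
    𝓕 (fun x ↦ conj (φ (-x))) ξ = conj (𝓕 φ ξ) := by
  rw [← fourierInv_eq_fourier_comp_neg (fun x ↦ conj (φ x)), fourierInv_eq, fourier_eq,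
    ← integral_conj]
  congr 1 with v
  simp [Circle.smul_def, ← Circle.coe_inv_eq_conj, AddChar.map_neg_eq_inv]

theorem Real.fourier_autocorrelation {φ : V → ℂ} (hφ : Integrable φ) (ξ : V) :
    𝓕 (autocorrelation φ) ξ = (‖𝓕 φ ξ‖ ^ 2 : ℝ) := by
  have hφ' : Integrable fun x ↦ conj (φ (-x)) :=
    conjCLE.toContinuousLinearMap.integrable_comp hφ.comp_neg
  rw [autocorrelation_eq_convolution, fourier_mul_convolution_eq hφ hφ', fourier_conj_comp_neg,
    mul_conj, normSq_eq_norm_sq]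

theorem integral_autocorrelation_fiber_zero {Y : Type*} [MeasureSpace Y]
    [SFinite (volume : Measure Y)] {f : V × Y → ℂ} (hf : Integrable fun p ↦ ‖f p‖ ^ 2) :
    ∫ y, autocorrelation (fun x ↦ f (x, y)) 0 = (∫ p, ‖f p‖ ^ 2 : ℝ) := by
  rw [Measure.volume_eq_prod] at hf ⊢
  simp only [autocorrelation_zero, integral_complex_ofReal, integral_prod_symm _ hf]

/-- For `f ∈ C_c(ℝ × ℝ^m)`, with `g(t) = ∫_y (f_y * f_y^*)(t) dy` where
`f_y(t) = f(t,y)` and `f_y^*(t) = conj(f_y(-t))`, one has `g ∈ C_c(ℝ)`,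
`ĝ(ξ) = ∫_y |f̂_y(ξ)|² dy ≥ 0`, and `∫ ĝ = ‖f‖²_{L²}`. -/
theorem autocorrelation_properties
    {m : ℕ} (f : ℝ × EuclideanSpace ℝ (Fin m) → ℂ)
    (hf : Continuous f) (hcpt : HasCompactSupport f)
    (g : ℝ → ℂ)
    (hg : ∀ t : ℝ, g t = ∫ y : EuclideanSpace ℝ (Fin m),
      ∫ s : ℝ, f (s, y) * (starRingEnd ℂ) (f (s - t, y))) :
    Continuous g ∧ HasCompactSupport g ∧
    (∀ ξ : ℝ, 𝓕 g ξ =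
      ((∫ y : EuclideanSpace ℝ (Fin m), ‖𝓕 (fun t : ℝ => f (t, y)) ξ‖ ^ 2 : ℝ) : ℂ)) ∧
    (∫ ξ : ℝ, (𝓕 g ξ).re) = ∫ p : ℝ × EuclideanSpace ℝ (Fin m), ‖f p‖ ^ 2 := by
  set H : ℝ → EuclideanSpace ℝ (Fin m) → ℂ := fun t y ↦ autocorrelation (fun s ↦ f (s, y)) t
  obtain rfl : g = fun t ↦ ∫ y, H t y := funext hg
  have hK_supp := hcpt.fiberwise_mul_comp_sub (hcpt.comp_left (map_zero conj))
  have hH_cont : Continuous H.uncurry :=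
    continuous_parametric_integral_of_hasCompactSupport (by fun_prop) hK_supp
  have hH_supp : HasCompactSupport H.uncurry := hK_supp.parametric_integral
  have hg_cont := continuous_parametric_integral_of_hasCompactSupport (μ := volume) hH_cont hH_supp
  have hg_supp := hH_supp.parametric_integral (μ := volume)
  have hg_fourier : ∀ ξ : ℝ, 𝓕 (fun t ↦ ∫ y, H t y) ξ =
      ((∫ y, ‖𝓕 (fun t : ℝ => f (t, y)) ξ‖ ^ 2 : ℝ) : ℂ) := fun ξ ↦ by
    rw [fourier_parametric_integral hH_cont hH_supp, ← integral_complex_ofReal]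
    exact integral_congr_ae <| .of_forall fun y ↦ fourier_autocorrelation
      ((hf.comp (by fun_prop)).integrable_of_hasCompactSupport (hcpt.comp_prodMk_const y)) ξ
  refine ⟨hg_cont, hg_supp, hg_fourier, ?_⟩
  have hg_int := hg_cont.integrable_of_hasCompactSupport (μ := volume) hg_supp
  have hFg_int := integrable_fourier_of_nonneg hg_int hg_cont.continuousAt fun ξ ↦
    (hg_fourier ξ).symm ▸ zero_le_real.mpr (integral_nonneg fun y ↦ by positivity)
  have hf_sq : Integrable fun p ↦ ‖f p‖ ^ 2 :=
    (by fun_prop : Continuous fun p ↦ ‖f p‖ ^ 2).integrable_of_hasCompactSupport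
      (hcpt.comp_left (g := fun z : ℂ ↦ ‖z‖ ^ 2) (by simp))
  calc ∫ ξ, (𝓕 (fun t ↦ ∫ y, H t y) ξ).re
      = (∫ y, H 0 y).re := by
        rw [← integral_fourier_eq_apply_zero hg_int hg_cont.continuousAt hFg_int]
        exact integral_re hFg_int
    _ = ∫ p, ‖f p‖ ^ 2 := by rw [integral_autocorrelation_fiber_zero hf_sq, ofReal_re]
end
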